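/- arXiv:1409.2056 — 3 statements merged into one kernel-verified Lean document; each statement's English description precedes it below -/
import Mathlib

section
/- Let u be a nonzero complex number, k ≥ 1 a natural number, and G_k(z) = conj(u)·z^k + u·conj(z)^k. Then there exists a real θ ∈ {0, π/(2k), π/k, 3π/(2k)} and a negative real constant c such that for all real α > 0, G_k(α·e^(iθ)·u) = c·α^k; in particular G_k(α·e^(iθ)·u) < 0 for all α > 0. -/
open Complex ComplexConjugate

/-!
Writing `w = conj u * u ^ k`, the function `G_k` is twice the real part of `conj u * z ^ k`, and
`conj u * (α e^{iθ} u) ^ k = α ^ k e^{ikθ} w`. The four angles make `e^{ikθ}` run through the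
quarter turns `1, I, -1, -I`, and one of `w, I w, -w, -I w` has negative real part since `w ≠ 0`.
-/

theorem conj_mul_pow_add_mul_conj_pow (u z : ℂ) (k : ℕ) :
    conj u * z ^ k + u * conj z ^ k = ((2 * (conj u * z ^ k).re : ℝ) : ℂ) := by
  have h : u * conj z ^ k = conj (conj u * z ^ k) := by simp
  rw [h, add_conj]

theorem conj_mul_ofReal_mul_exp_mul_pow (u : ℂ) (k : ℕ) (α θ : ℝ) :
    conj u * ((α : ℂ) * exp (θ * I) * u) ^ k
      = ((α ^ k : ℝ) : ℂ) * (exp (k * θ * I) * (conj u * u ^ k)) := by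
  rw [mul_assoc (k : ℂ), exp_nat_mul]
  push_cast
  ring

theorem exp_mul_quarter_angle_mul_I {k : ℕ} (hk : k ≠ 0) (m : ℕ) :
    exp (k * ((m * Real.pi / (2 * k) : ℝ) : ℂ) * I) = I ^ m := by
  have hk' : (k : ℂ) ≠ 0 := Nat.cast_ne_zero.mpr hk
  have h : (k : ℂ) * ((m * Real.pi / (2 * k) : ℝ) : ℂ) * I = m * (Real.pi / 2 * I) := by
    push_cast
    field_simp
  rw [h, exp_nat_mul, exp_pi_div_two_mul_I]

theorem exists_I_pow_mul_re_neg {w : ℂ} (hw : w ≠ 0) : ∃ m < 4, (I ^ m * w).re < 0 := by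
  rcases lt_trichotomy w.re 0 with h | h | h
  · exact ⟨0, by norm_num, by simpa using h⟩
  · have him : w.im ≠ 0 := fun h' ↦ hw (Complex.ext h h')
    rcases him.lt_or_gt with h' | h'
    · exact ⟨3, by norm_num, by simpa [pow_succ] using h'⟩
    · exact ⟨1, by norm_num, by simpa using h'⟩
  · exact ⟨2, by norm_num, by simpa using h⟩

theorem quarter_angle_mem {k m : ℕ} (hk : k ≠ 0) (hm : m < 4) :
    (m * Real.pi / (2 * k) : ℝ)
      ∈ ({0, Real.pi / (2 * k), Real.pi / k, 3 * Real.pi / (2 * k)} : Set ℝ) := by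
  have hk' : (k : ℝ) ≠ 0 := Nat.cast_ne_zero.mpr hk
  interval_cases m
  · simp
  · simp
  · right; right; left
    field_simp
    ring
  · simp

theorem stmt2 (u : ℂ) (hu : u ≠ 0) (k : ℕ) (hk : 1 ≤ k)
    (G : ℂ → ℂ) (hG : ∀ z, G z = (starRingEnd ℂ) u * z ^ k + u * ((starRingEnd ℂ) z) ^ k) :
    ∃ θ ∈ ({0, Real.pi / (2 * k), Real.pi / k, 3 * Real.pi / (2 * k)} : Set ℝ),
      ∃ c : ℝ, c < 0 ∧
        (∀ α : ℝ, 0 < α →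
          G ((α : ℂ) * Complex.exp (θ * Complex.I) * u) = (c : ℂ) * (α : ℂ) ^ k) ∧
        (∀ α : ℝ, 0 < α →
          (G ((α : ℂ) * Complex.exp (θ * Complex.I) * u)).re < 0) := by
  have hk0 : k ≠ 0 := Nat.one_le_iff_ne_zero.mp hk
  have hw : conj u * u ^ k ≠ 0 := mul_ne_zero (by simpa using hu) (pow_ne_zero k hu)
  obtain ⟨m, hm, hneg⟩ := exists_I_pow_mul_re_neg hw
  let c := 2 * (I ^ m * (conj u * u ^ k)).re
  have hG_eq : ∀ α : ℝ,
      G ((α : ℂ) * exp ((m * Real.pi / (2 * k) : ℝ) * I) * u) = ((c * α ^ k : ℝ) : ℂ) := by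
    intro α
    rw [hG, conj_mul_pow_add_mul_conj_pow, conj_mul_ofReal_mul_exp_mul_pow,
      exp_mul_quarter_angle_mul_I hk0, re_ofReal_mul]
    congr 1
    ring
  refine ⟨_, quarter_angle_mem hk0 hm, c, by linarith, fun α _ ↦ ?_, fun α hα ↦ ?_⟩
  · rw [hG_eq]
    push_cast
    ring
  · rw [hG_eq, ofReal_re]
    exact mul_neg_of_neg_of_pos (by linarith) (pow_pos hα k)
end

section
/- Let p be a complex polynomial of degree n ≥ 1 and z₀ ∈ ℂ with p(z₀) ≠ 0. Then there exists a complex number d and a real α* > 0 such that for all α ∈ (0, α*), |p(z₀ + α·d)| < |p(z₀)|. That is, at any non-root point, the modulus of p admits a direction of strict descent. -/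
/-!
Write `p = p(z₀) + (X - z₀)^k r` with `k ≥ 1` and `r(z₀) ≠ 0`, and choose `d` with
`d^k r(z₀) = -p(z₀)`. Along the ray `z₀ + α d`,
`p(z₀ + α d) = (1 - α^k) p(z₀) + α^k d^k (r(z₀ + α d) - r(z₀))`,
and the last factor tends to `0` with `α`; for small `α > 0` its modulus is below `|p(z₀)|`,
so `|p(z₀ + α d)| < (1 - α^k) |p(z₀)| + α^k |p(z₀)| = |p(z₀)|`.
-/

open Polynomial Complex Filter Topology

theorem Polynomial.exists_eq_C_eval_add_X_sub_C_pow_mul {R : Type*} [CommRing R] {p : R[X]}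
    (hp : p.natDegree ≠ 0) (a : R) :
    ∃ k ≠ 0, ∃ r : R[X], r.eval a ≠ 0 ∧ p = C (p.eval a) + (X - C a) ^ k * r := by
  have hne : p - C (p.eval a) ≠ 0 := fun h => hp (by rw [sub_eq_zero.mp h, natDegree_C])
  obtain ⟨r, hr, hndvd⟩ := exists_eq_pow_rootMultiplicity_mul_and_not_dvd _ hne a
  refine ⟨_, ((rootMultiplicity_pos hne (x := a)).2 (by simp)).ne', r,
    fun h => hndvd (dvd_iff_isRoot.2 h), ?_⟩
  rw [← hr]
  ring

theorem Complex.exists_eventually_norm_add_pow_mul_lt {c : ℂ} (hc : c ≠ 0) {k : ℕ}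
    (hk : k ≠ 0) {g : ℂ → ℂ} (hg : ContinuousAt g 0) (hg0 : g 0 ≠ 0) :
    ∃ d : ℂ, ∀ᶠ α : ℝ in 𝓝[>] 0,
      ‖c + ((α : ℂ) * d) ^ k * g (α * d)‖ < ‖c‖ := by
  obtain ⟨d, hd⟩ := IsAlgClosed.exists_pow_nat_eq (-c / g 0) (Nat.pos_of_ne_zero hk)
  refine ⟨d, ?_⟩
  set e : ℝ → ℂ := fun α => d ^ k * (g (α * d) - g 0) with he
  have he_small : ∀ᶠ α : ℝ in 𝓝 0, ‖e α‖ < ‖c‖ := by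
    have hcont : ContinuousAt e 0 :=
      continuousAt_const.mul ((hg.comp_of_eq (by fun_prop) (by simp)).sub continuousAt_const)
    have hlim : Tendsto e (𝓝 0) (𝓝 0) := by simpa [he] using hcont.tendsto
    exact hlim.norm.eventually (gt_mem_nhds (by simpa using hc))
  filter_upwards [nhdsWithin_le_nhds he_small, nhdsWithin_le_nhds (gt_mem_nhds one_pos),
    self_mem_nhdsWithin] with α hα hα1 (hα0 : 0 < α)
  have hsplit : c + ((α : ℂ) * d) ^ k * g (α * d) =
      ((1 - α ^ k : ℝ) : ℂ) * c + (α : ℂ) ^ k * e α := by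
    have : d ^ k * g 0 = -c := by rw [hd]; field_simp
    simp only [he]
    push_cast
    linear_combination (α : ℂ) ^ k * this
  have hαk : α ^ k < 1 := pow_lt_one₀ hα0.le hα1 hk
  calc ‖c + ((α : ℂ) * d) ^ k * g (α * d)‖
      ≤ (1 - α ^ k) * ‖c‖ + α ^ k * ‖e α‖ := by
        rw [hsplit]
        refine (norm_add_le _ _).trans_eq ?_
        rw [norm_mul, norm_mul, norm_pow, Complex.norm_real, Complex.norm_real,
          Real.norm_of_nonneg (by linarith), Real.norm_of_nonneg hα0.le]
    _ < ‖c‖ := by nlinarith [pow_pos hα0 k]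

theorem stmt8 (p : Polynomial ℂ) (hp : 1 ≤ p.natDegree) (z₀ : ℂ) (hz : p.eval z₀ ≠ 0) :
    ∃ d : ℂ, ∃ αs : ℝ, 0 < αs ∧
      ∀ α : ℝ, α ∈ Set.Ioo 0 αs →
        ‖p.eval (z₀ + (α : ℂ) * d)‖ < ‖p.eval z₀‖ := by
  obtain ⟨k, hk, r, hr, hpr⟩ := p.exists_eq_C_eval_add_X_sub_C_pow_mul (by omega) z₀
  have hg : ContinuousAt (fun w => r.eval (z₀ + w)) 0 := by fun_prop
  obtain ⟨d, hd⟩ := exists_eventually_norm_add_pow_mul_lt hz hk hg (by simpa using hr)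
  obtain ⟨αs, hαs, hsub⟩ := mem_nhdsGT_iff_exists_Ioo_subset.1 hd
  refine ⟨d, αs, hαs, fun α hα => ?_⟩
  have heval :
      p.eval (z₀ + α * d) = p.eval z₀ + ((α : ℂ) * d) ^ k * r.eval (z₀ + α * d) := by
    conv_lhs => rw [hpr]
    simp
  rw [heval]
  exact hsub hα
end

section
/- Let p be a complex polynomial of degree n ≥ 1 and z₀ ∈ ℂ with p(z₀) ≠ 0. Let k be the smallest positive index with p^(k)(z₀) ≠ 0 and u = (1/k!)·p(z₀)·conj(p^(k)(z₀)). Then the real-valued function φ(α) = |p(z₀ + α·u)|² satisfies φ(α) = |p(z₀)|² + 2·Re(u^(k-1))·|u|²·α^k + o(α^k) as α → 0⁺. -/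
/-!
Taylor expansion at `z₀`, with the derivatives of orders `1, …, k-1` vanishing, gives
`p (z₀ + w) = p z₀ + w ^ k * q w` for a polynomial `q` with `q 0 = p⁽ᵏ⁾(z₀) / k!`. Expanding the
square, `|p (z₀ + α u)|² = |p z₀|² + 2 α^k Re (conj (p z₀) u^k q 0) + o(α^k)`, and the choice of `u`
is exactly what makes `conj (p z₀) · q 0 = conj u`, so the coefficient is `|u|² Re (u^(k-1))`.
-/

open Polynomial Complex Filter Topology
open scoped RealInnerProductSpace ComplexConjugate

namespace Polynomial

variable {K : Type*} [Field K] [CharZero K]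

theorem taylor_coeff_eq_iterate_derivative_eval_div (p : K[X]) (z₀ : K) (i : ℕ) :
    (taylor z₀ p).coeff i = (derivative^[i] p).eval z₀ / i.factorial := by
  rw [eq_div_iff (Nat.cast_ne_zero.mpr i.factorial_ne_zero), taylor_coeff,
    ← factorial_smul_hasseDeriv, LinearMap.smul_apply, eval_smul, nsmul_eq_mul, mul_comm]

theorem exists_eval_add_eq_add_pow_mul_of_iterate_derivative_eval_eq_zero (p : K[X]) (z₀ : K)
    {k : ℕ} (hk : k ≠ 0)
    (hvanish : ∀ j : ℕ, 1 ≤ j → j < k → (derivative^[j] p).eval z₀ = 0) :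
    ∃ q : K[X], q.eval 0 = (derivative^[k] p).eval z₀ / k.factorial ∧
      ∀ w : K, p.eval (z₀ + w) = p.eval z₀ + w ^ k * q.eval w := by
  have hlow : ∀ d < k, (taylor z₀ p - C (p.eval z₀)).coeff d = 0 := by
    intro d hd
    rcases Nat.eq_zero_or_pos d with rfl | hd0
    · simp
    · rw [coeff_sub, coeff_C, if_neg hd0.ne', taylor_coeff_eq_iterate_derivative_eval_div,
        hvanish d hd0 hd, zero_div, sub_zero]
  obtain ⟨q, hq⟩ := X_pow_dvd_iff.mpr hlow
  refine ⟨q, ?_, fun w => ?_⟩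
  · have hcoeff := congrArg (coeff · k) hq
    simp only [coeff_sub, coeff_C, if_neg hk, sub_zero, coeff_X_pow_mul', le_refl, if_true,
      Nat.sub_self, taylor_coeff_eq_iterate_derivative_eval_div] at hcoeff
    rw [← coeff_zero_eq_eval_zero, ← hcoeff]
  · have := congrArg (eval w) hq
    rw [eval_sub, taylor_eval, eval_C, eval_mul, eval_pow, eval_X] at this
    rw [add_comm z₀, ← this, add_sub_cancel]

end Polynomial

theorem tendsto_norm_add_pow_smul_sq_sub_div_pow {E : Type*} [NormedAddCommGroup E]
    [InnerProductSpace ℝ E] (A : E) {h : ℝ → E} (hh : ContinuousAt h 0) {k : ℕ} (hk : k ≠ 0) :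
    Tendsto (fun t : ℝ => (‖A + t ^ k • h t‖ ^ 2 - ‖A‖ ^ 2 - 2 * ⟪A, h 0⟫ * t ^ k) / t ^ k)
      (𝓝[≠] 0) (𝓝 0) := by
  set ε : ℝ → ℝ := fun t => 2 * ⟪A, h t - h 0⟫ + t ^ k * ‖h t‖ ^ 2
  have hε : Tendsto ε (𝓝 0) (𝓝 0) := by
    have hcont : ContinuousAt ε 0 := by fun_prop
    simpa [ε, zero_pow hk] using hcont.tendsto
  refine (hε.mono_left nhdsWithin_le_nhds).congr' ?_
  filter_upwards [self_mem_nhdsWithin] with t (ht : t ≠ 0)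
  have htk : t ^ k ≠ 0 := pow_ne_zero k ht
  simp only [ε]
  rw [eq_div_iff htk, norm_add_sq_real, inner_smul_right, norm_smul, mul_pow, Real.norm_eq_abs,
    sq_abs, inner_sub_right]
  ring

theorem Complex.inner_pow_mul_eq_of_conj_mul_eq {A c u : ℂ} (h : conj A * c = conj u)
    {k : ℕ} (hk : k ≠ 0) : ⟪A, u ^ k * c⟫ = (u ^ (k - 1)).re * ‖u‖ ^ 2 := by
  obtain ⟨m, rfl⟩ := Nat.exists_eq_succ_of_ne_zero hk
  have hprod : u ^ (m + 1) * c * conj A = u ^ m * ((‖u‖ ^ 2 : ℝ) : ℂ) := by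
    rw [Complex.ofReal_pow, ← Complex.mul_conj', ← h]
    ring
  rw [Complex.inner, hprod, Nat.succ_sub_one, Complex.re_mul_ofReal]

theorem stmt15_general (p : Polynomial ℂ)
    (z₀ : ℂ)
    (k : ℕ) (hk1 : 1 ≤ k)
    (hkmin : ∀ j : ℕ, 1 ≤ j → j < k → ((Polynomial.derivative)^[j] p).eval z₀ = 0)
    (u : ℂ) (hu : u = (1 / (k.factorial : ℂ)) * p.eval z₀ *
      (starRingEnd ℂ) (((Polynomial.derivative)^[k] p).eval z₀))
    (φ : ℝ → ℝ) (hφ : ∀ α : ℝ, φ α = ‖p.eval (z₀ + (α : ℂ) * u)‖ ^ 2) :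
    ∃ r : ℝ → ℝ,
      (∀ α : ℝ, φ α = ‖p.eval z₀‖ ^ 2
          + 2 * (u ^ (k - 1)).re * ‖u‖ ^ 2 * α ^ k + r α) ∧
      Filter.Tendsto (fun α : ℝ => r α / α ^ k) (nhdsWithin 0 (Set.Ioi 0)) (nhds 0) := by
  have hk0 : k ≠ 0 := by omega
  obtain ⟨q, hq0, hq⟩ :=
    exists_eval_add_eq_add_pow_mul_of_iterate_derivative_eval_eq_zero p z₀ hk0 hkmin
  set h : ℝ → ℂ := fun α => u ^ k * q.eval (α * u)
  have hexpand : ∀ α : ℝ, p.eval (z₀ + α * u) = p.eval z₀ + α ^ k • h α := by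
    intro α
    rw [hq, Complex.real_smul]
    push_cast
    ring
  have hconj : conj (p.eval z₀) * q.eval 0 = conj u := by
    rw [hq0, hu]
    simp only [map_mul, map_div₀, map_one, map_natCast, Complex.conj_conj]
    ring
  have hinner : ⟪p.eval z₀, h 0⟫ = (u ^ (k - 1)).re * ‖u‖ ^ 2 := by
    simpa [h] using Complex.inner_pow_mul_eq_of_conj_mul_eq hconj hk0
  refine ⟨fun α => φ α - ‖p.eval z₀‖ ^ 2 - 2 * (u ^ (k - 1)).re * ‖u‖ ^ 2 * α ^ k,
    fun α => by ring, ?_⟩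
  have hh : ContinuousAt h 0 := by fun_prop
  refine ((tendsto_norm_add_pow_smul_sq_sub_div_pow (p.eval z₀) hh hk0).mono_left
    (nhdsWithin_mono 0 fun x hx => ne_of_gt hx)).congr fun α => ?_
  simp only [hφ, hexpand, hinner]
  ring

theorem stmt15 (p : Polynomial ℂ) (n : ℕ) (hn : 1 ≤ n) (hdeg : p.natDegree = n)
    (z₀ : ℂ) (hz : p.eval z₀ ≠ 0)
    (k : ℕ) (hk1 : 1 ≤ k)
    (hk : ((Polynomial.derivative)^[k] p).eval z₀ ≠ 0)
    (hkmin : ∀ j : ℕ, 1 ≤ j → j < k → ((Polynomial.derivative)^[j] p).eval z₀ = 0)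
    (u : ℂ) (hu : u = (1 / (k.factorial : ℂ)) * p.eval z₀ *
      (starRingEnd ℂ) (((Polynomial.derivative)^[k] p).eval z₀))
    (φ : ℝ → ℝ) (hφ : ∀ α : ℝ, φ α = ‖p.eval (z₀ + (α : ℂ) * u)‖ ^ 2) :
    ∃ r : ℝ → ℝ,
      (∀ α : ℝ, φ α = ‖p.eval z₀‖ ^ 2
          + 2 * (u ^ (k - 1)).re * ‖u‖ ^ 2 * α ^ k + r α) ∧
      Filter.Tendsto (fun α : ℝ => r α / α ^ k) (nhdsWithin 0 (Set.Ioi 0)) (nhds 0) :=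
  stmt15_general p z₀ k hk1 hkmin u hu φ hφ
end
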